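/- arXiv:0910.1000 — 2 statements merged into one kernel-verified Lean document; each statement's English description precedes it below -/
import Mathlib

section
/- If x, y, z are nonzero real numbers satisfying the first two of the three cyclic bisector equations for a triangle with sides a, b, c (all nonzero), then they satisfy the third: -z(b²x² - a²y²) + xy((b²+c²-a²)x - (c²+a²-b²)y) = 0. -/
theorem third_bisector_equation (a b c x y z : ℝ)
    (ha : a ≠ 0) (hb : b ≠ 0) (hc : c ≠ 0)
    (hx : x ≠ 0) (hy : y ≠ 0) (hz : z ≠ 0)
    (h1 : -x * (c ^ 2 * y ^ 2 - b ^ 2 * z ^ 2) +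
      y * z * ((c ^ 2 + a ^ 2 - b ^ 2) * y - (a ^ 2 + b ^ 2 - c ^ 2) * z) = 0)
    (h2 : -y * (a ^ 2 * z ^ 2 - c ^ 2 * x ^ 2) +
      x * z * ((a ^ 2 + b ^ 2 - c ^ 2) * z - (b ^ 2 + c ^ 2 - a ^ 2) * x) = 0) :
    -z * (b ^ 2 * x ^ 2 - a ^ 2 * y ^ 2) +
      x * y * ((b ^ 2 + c ^ 2 - a ^ 2) * x - (c ^ 2 + a ^ 2 - b ^ 2) * y) = 0 := by
  have h : z * (-z * (b ^ 2 * x ^ 2 - a ^ 2 * y ^ 2) +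
      x * y * ((b ^ 2 + c ^ 2 - a ^ 2) * x - (c ^ 2 + a ^ 2 - b ^ 2) * y)) = 0 := by
    linear_combination (-x) * h1 - y * h2
  exact (mul_eq_zero.mp h).resolve_left hz
end

section
/- For the triangle with sides a = 2, b = 3, c = √7, no solution (x, y, z) with xyz ≠ 0 of the two bisector equations has all of x, y, z constructible (equivalently, the ratio z/y is never constructible). -/
/-
Eliminating `x` shows that `t = z / y` is a root of `45 t³ - 66 t² + 11 t + 14`. This cubic has
no rational root (its homogenization has no nontrivial zero mod 13), so it is irreducible over ℚ
and `t` has degree 3. On the other hand, adjoining a quadratic extension `B / A` to a field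
`M ⊇ A` multiplies `[M : ℚ]` by `[M B : M] ≤ [B : A] = 2`, so finitely many constructible
numbers lie in a common field of degree a power of 2 over ℚ, which cannot contain `t`.
-/

open Polynomial IntermediateField Module

/-- A real number is constructible with compass and straightedge iff it lies in a field
obtained from ℚ (the prime subfield `⊥` of `ℝ`) by a finite tower of quadratic extensions. -/
def ConstructibleReal (α : ℝ) : Prop :=
  ∃ (n : ℕ) (F : ℕ → Subfield ℝ), F 0 = ⊥ ∧
    (∀ i < n, F i ≤ F (i + 1) ∧ Subfield.relfinrank (F i) (F (i + 1)) = 2) ∧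
    α ∈ F n

section

variable {K L : Type*} [Field K] [Field L] [Algebra K L]

theorem IntermediateField.adjoin_eq_extendScalars_sup (E E' : IntermediateField K L) :
    adjoin E (E' : Set L) = extendScalars (le_sup_left : E ≤ E ⊔ E') :=
  restrictScalars_injective K <| by
    rw [restrictScalars_adjoin_eq_sup, adjoin_self, extendScalars_restrictScalars]

theorem IntermediateField.relrank_sup_le_rank (E E' : IntermediateField K L)
    [Algebra.IsAlgebraic K E'] : relrank E (E ⊔ E') ≤ Module.rank K E' := by
  rw [relrank_eq_rank_of_le le_sup_left, ← adjoin_eq_extendScalars_sup]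
  exact adjoin_rank_le_of_isAlgebraic_right E E'

theorem IntermediateField.relrank_sup_le_relrank_of_le {A B M : IntermediateField K L}
    (hAM : A ≤ M) (hAB : A ≤ B) [Algebra.IsAlgebraic A (extendScalars hAB)] :
    relrank M (M ⊔ B) ≤ relrank A B := by
  have key := relrank_sup_le_rank (extendScalars hAM) (extendScalars hAB)
  rwa [← relrank_eq_rank_of_le hAB, extendScalars_sup] at key

theorem IntermediateField.relfinrank_sup_dvd_two_of_le {A B M : IntermediateField K L}
    (hAM : A ≤ M) (hAB : A ≤ B) (h2 : relfinrank A B = 2) :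
    relfinrank M (M ⊔ B) ∣ 2 := by
  have hfin : relrank A B < Cardinal.aleph0 :=
    (Cardinal.toNat_ne_zero.mp (h2.symm ▸ two_ne_zero : relfinrank A B ≠ 0)).2
  have : Module.Finite A (extendScalars hAB) := by
    rwa [← Module.rank_lt_aleph0_iff, ← relrank_eq_rank_of_le hAB]
  have hle := relrank_sup_le_relrank_of_le hAM hAB
  have hpos : 0 < relfinrank M (M ⊔ B) := by
    have hne : relrank M (M ⊔ B) ≠ 0 := by
      rw [relrank_eq_rank_of_le le_sup_left]
      exact rank_pos.ne'
    rw [relfinrank_eq_toNat_relrank]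
    exact Cardinal.toNat_pos.mpr ⟨hne, hle.trans_lt hfin⟩
  have hle2 : relfinrank M (M ⊔ B) ≤ 2 := h2 ▸ Cardinal.toNat_le_toNat hle hfin
  interval_cases relfinrank M (M ⊔ B) <;> norm_num

theorem IntermediateField.finrank_sup_dvd_two_pow_mul {G : ℕ → IntermediateField K L} {n : ℕ}
    (hle : ∀ i < n, G i ≤ G (i + 1)) (h2 : ∀ i < n, relfinrank (G i) (G (i + 1)) = 2)
    {M : IntermediateField K L} (hM : G 0 ≤ M) :
    finrank K ↥(M ⊔ G n) ∣ 2 ^ n * finrank K M := by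
  induction n with
  | zero => rw [sup_eq_left.mpr hM, pow_zero, one_mul]
  | succ i ih =>
    have hsup : M ⊔ G (i + 1) = M ⊔ G i ⊔ G (i + 1) := by
      rw [sup_assoc, sup_eq_right.mpr (hle i i.lt_succ_self)]
    rw [hsup, ← relfinrank_bot_left, ← relfinrank_mul_relfinrank bot_le le_sup_left,
      relfinrank_bot_left, pow_succ, mul_right_comm]
    exact mul_dvd_mul (ih (fun j hj => hle j (hj.trans i.lt_succ_self))
      (fun j hj => h2 j (hj.trans i.lt_succ_self)))
      (relfinrank_sup_dvd_two_of_le le_sup_right (hle i i.lt_succ_self) (h2 i i.lt_succ_self))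

theorem Polynomial.Irreducible.natDegree_dvd_finrank_of_mem {p : K[X]} (hp : Irreducible p)
    {α : L} (hα : aeval α p = 0) {M : IntermediateField K L} [FiniteDimensional K M]
    (hαM : α ∈ M) :
    p.natDegree ∣ finrank K M := by
  rw [minpoly.Irreducible.eq_minpoly hp hα, natDegree_C_mul (leadingCoeff_ne_zero.mpr hp.ne_zero),
    ← IntermediateField.minpoly_eq ⟨α, hαM⟩]
  exact minpoly.degree_dvd (.of_finite K _)

theorem Polynomial.Irreducible.notMem_of_finrank_dvd_two_pow {p : K[X]} (hp : Irreducible p)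
    (hodd : Odd p.natDegree) (hdeg : 1 < p.natDegree) {α : L} (hα : aeval α p = 0)
    {M : IntermediateField K L} {n : ℕ} (hM : finrank K M ∣ 2 ^ n) : α ∉ M := by
  intro hαM
  have : FiniteDimensional K M :=
    Module.finite_of_finrank_pos (Nat.pos_of_dvd_of_pos hM (by positivity))
  have hdvd := (hp.natDegree_dvd_finrank_of_mem hα hαM).trans hM
  have := (Nat.Coprime.pow_right n (Nat.coprime_two_right.mpr hodd)).eq_one_of_dvd hdvd
  omega

end

theorem ConstructibleReal.exists_finrank_dvd_two_pow_mul {α : ℝ} (h : ConstructibleReal α)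
    (M : IntermediateField ℚ ℝ) :
    ∃ M' : IntermediateField ℚ ℝ, M ≤ M' ∧ α ∈ M' ∧ ∃ n, finrank ℚ M' ∣ 2 ^ n * finrank ℚ M := by
  obtain ⟨n, F, hF0, hF, hα⟩ := h
  let G : ℕ → IntermediateField ℚ ℝ := fun i =>
    (F i).toIntermediateField fun q => by simp
  have hG0 : G 0 ≤ M := fun x hx => bot_le (a := M.toSubfield) (hF0 ▸ hx : x ∈ (⊥ : Subfield ℝ))
  have hle : ∀ i < n, G i ≤ G (i + 1) := fun i hi => (hF i hi).1
  have h2 : ∀ i < n, relfinrank (G i) (G (i + 1)) = 2 := fun i hi => (hF i hi).2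
  have hαG : α ∈ G n := hα
  exact ⟨M ⊔ G n, le_sup_left, le_sup_right (a := M) hαG, n,
    finrank_sup_dvd_two_pow_mul hle h2 hG0⟩

theorem cubic_form_eq_zero_mod_thirteen :
    ∀ a b : ZMod 13, 45 * a ^ 3 - 66 * a ^ 2 * b + 11 * a * b ^ 2 + 14 * b ^ 3 = 0 →
      a = 0 ∧ b = 0 := by
  decide

theorem cubic_ne_zero_of_rat (q : ℚ) : 45 * q ^ 3 - 66 * q ^ 2 + 11 * q + 14 ≠ 0 := by
  intro h
  have hden : (q.den : ℚ) ≠ 0 := by exact_mod_cast q.den_nz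
  have hnum : (q.num : ℚ) = q * q.den := (div_eq_iff hden).mp (Rat.num_div_den q)
  have hform : 45 * q.num ^ 3 - 66 * q.num ^ 2 * q.den + 11 * q.num * q.den ^ 2
      + 14 * (q.den : ℤ) ^ 3 = 0 := by
    have : 45 * (q.num : ℚ) ^ 3 - 66 * q.num ^ 2 * q.den + 11 * q.num * q.den ^ 2
        + 14 * (q.den : ℚ) ^ 3 = 0 := by
      rw [hnum]
      linear_combination (q.den : ℚ) ^ 3 * h
    exact_mod_cast this
  obtain ⟨hnum, hden13⟩ := cubic_form_eq_zero_mod_thirteen _ _ (by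
    simpa using congrArg (Int.cast : ℤ → ZMod 13) hform)
  rw [ZMod.intCast_zmod_eq_zero_iff_dvd, ← Int.natAbs_dvd_natAbs] at hnum
  rw [ZMod.natCast_eq_zero_iff] at hden13
  have := Nat.dvd_gcd hnum hden13
  rw [q.reduced] at this
  norm_num at this

theorem natDegree_cubic :
    (C 45 * X ^ 3 - C 66 * X ^ 2 + C 11 * X + C 14 : ℚ[X]).natDegree = 3 := by
  compute_degree!

theorem irreducible_cubic :
    Irreducible (C 45 * X ^ 3 - C 66 * X ^ 2 + C 11 * X + C 14 : ℚ[X]) := by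
  apply irreducible_of_degree_le_three_of_not_isRoot
  · rw [natDegree_cubic]
    decide
  · intro q hq
    apply cubic_ne_zero_of_rat q
    simpa using hq

theorem cubic_eq_zero_of_bisector {x y z : ℝ} (hy : y ≠ 0) (hz : z ≠ 0)
    (h1 : -x * (7 * y ^ 2 - 9 * z ^ 2) + y * z * (2 * y - 6 * z) = 0)
    (h2 : -y * (4 * z ^ 2 - 7 * x ^ 2) + x * z * (6 * z - 12 * x) = 0) :
    45 * (z / y) ^ 3 - 66 * (z / y) ^ 2 + 11 * (z / y) + 14 = 0 := by
  -- Eliminates `x`, which occurs linearly in `h1`; the result is `-12 y² z²` times the cubic form.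
  have hP : y ^ 2 * z ^ 2 * (45 * z ^ 3 - 66 * z ^ 2 * y + 11 * z * y ^ 2 + 14 * y ^ 3) = 0 := by
    linear_combination (-1/12 : ℝ) * ((7 * y ^ 2 - 9 * z ^ 2) ^ 2 * h2 -
      ((-x * (7 * y ^ 2 - 9 * z ^ 2) - y * z * (2 * y - 6 * z)) * (7 * y - 12 * z)
        - 6 * z ^ 2 * (7 * y ^ 2 - 9 * z ^ 2)) * h1)
  have hP' := (mul_eq_zero.mp hP).resolve_left (by positivity)
  field_simp
  linear_combination hP'

theorem bisector_solution_not_constructible_general (x y z : ℝ)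
    (hy : y ≠ 0) (hz : z ≠ 0)
    (h1 : -x * (7 * y ^ 2 - 9 * z ^ 2) + y * z * (2 * y - 6 * z) = 0)
    (h2 : -y * (4 * z ^ 2 - 7 * x ^ 2) + x * z * (6 * z - 12 * x) = 0) :
    ¬ (ConstructibleReal x ∧ ConstructibleReal y ∧ ConstructibleReal z) ∧
    ¬ ConstructibleReal (z / y) := by
  have hroot : aeval (z / y) (C 45 * X ^ 3 - C 66 * X ^ 2 + C 11 * X + C 14 : ℚ[X]) = 0 := by
    simpa using cubic_eq_zero_of_bisector hy hz h1 h2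
  have hnot : ∀ (M : IntermediateField ℚ ℝ) (n : ℕ), finrank ℚ M ∣ 2 ^ n → z / y ∉ M :=
    fun _ _ => irreducible_cubic.notMem_of_finrank_dvd_two_pow
      (by rw [natDegree_cubic]; decide) (by rw [natDegree_cubic]; decide) hroot
  refine ⟨fun ⟨_, hcy, hcz⟩ => ?_, fun hc => ?_⟩
  · obtain ⟨My, -, hyMy, m, hm⟩ := hcy.exists_finrank_dvd_two_pow_mul ⊥
    obtain ⟨M, hMyM, hzM, n, hn⟩ := hcz.exists_finrank_dvd_two_pow_mul My
    rw [IntermediateField.finrank_bot, mul_one] at hm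
    exact hnot M (n + m) (by rw [pow_add]; exact hn.trans (mul_dvd_mul_left _ hm))
      (div_mem hzM (hMyM hyMy))
  · obtain ⟨M, -, hM, n, hn⟩ := hc.exists_finrank_dvd_two_pow_mul ⊥
    rw [IntermediateField.finrank_bot, mul_one] at hn
    exact hnot M n hn hM

theorem bisector_solution_not_constructible (x y z : ℝ)
    (hx : x ≠ 0) (hy : y ≠ 0) (hz : z ≠ 0)
    (h1 : -x * (7 * y ^ 2 - 9 * z ^ 2) + y * z * (2 * y - 6 * z) = 0)
    (h2 : -y * (4 * z ^ 2 - 7 * x ^ 2) + x * z * (6 * z - 12 * x) = 0) :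
    ¬ (ConstructibleReal x ∧ ConstructibleReal y ∧ ConstructibleReal z) ∧
    ¬ ConstructibleReal (z / y) :=
  bisector_solution_not_constructible_general x y z hy hz h1 h2
end
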